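/- arXiv:1711.04645 — 9 statements merged into one kernel-verified Lean document; each statement's English description precedes it below -/
import Mathlib

section
/- Let Ω be a measurable space and X a Hausdorff topological space in which every compact subset is second countable in the relative topology. If F, G : Ω → X are closed-valued compact-measurable multifunctions, then the multifunction ω ↦ F(ω) ∩ G(ω) is compact-measurable. -/
open TopologicalSpace

/-- The intersection of two closed-valued compact-measurable multifunctions into a
Hausdorff space with second countable compacts is compact-measurable. -/
theorem stmt_1 {Ω X : Type*} [MeasurableSpace Ω] [TopologicalSpace X] [T2Space X]
    (hX : ∀ K : Set X, IsCompact K → SecondCountableTopology K)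
    (F G : Ω → Set X)
    (hFcl : ∀ ω, IsClosed (F ω)) (hGcl : ∀ ω, IsClosed (G ω))
    (hF : ∀ K : Set X, IsCompact K → MeasurableSet {ω | (F ω ∩ K).Nonempty})
    (hG : ∀ K : Set X, IsCompact K → MeasurableSet {ω | (G ω ∩ K).Nonempty}) :
    ∀ K : Set X, IsCompact K → MeasurableSet {ω | ((F ω ∩ G ω) ∩ K).Nonempty} := by
  intro K hK
  rcases K.eq_empty_or_nonempty with rfl | hKne
  · simp
  haveI := hX K hK
  haveI : CompactSpace K := isCompact_iff_compactSpace.mp hK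
  haveI : Nonempty K := hKne.to_subtype
  letI : MetricSpace K := TopologicalSpace.metrizableSpaceMetric K
  obtain ⟨u, hu⟩ := TopologicalSpace.exists_dense_seq K
  set C : ℕ → ℕ → Set X := fun m n => Subtype.val '' Metric.closedBall (u m) (1/(n+1)) with hC
  have hCcomp : ∀ m n, IsCompact (C m n) := fun m n =>
    (Metric.isCompact_of_isClosed_isBounded Metric.isClosed_closedBall (Metric.isBounded_closedBall)).image
      continuous_subtype_val
  have key : {ω | ((F ω ∩ G ω) ∩ K).Nonempty}
      = ⋂ n, ⋃ m, ({ω | (F ω ∩ C m n).Nonempty} ∩ {ω | (G ω ∩ C m n).Nonempty}) := by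
    ext ω
    simp only [Set.mem_setOf_eq, Set.mem_iInter, Set.mem_iUnion, Set.mem_inter_iff]
    constructor
    · rintro ⟨x, ⟨⟨hxF, hxG⟩, hxK⟩⟩ n
      obtain ⟨m, hm⟩ := hu.exists_dist_lt (⟨x, hxK⟩ : K) (by positivity : (0:ℝ) < 1/(n+1))
      refine ⟨m, ⟨x, hxF, ⟨x, hxK⟩, ?_, rfl⟩, ⟨x, hxG, ⟨x, hxK⟩, ?_, rfl⟩⟩ <;>
        · rw [Metric.mem_closedBall]; exact hm.le
    · intro h
      choose m ha hb using h
      -- extract points in K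
      have haK : ∀ n, ∃ a' : K, a' ∈ Metric.closedBall (u (m n)) (1/(n+1)) ∧ (a' : X) ∈ F ω := by
        intro n
        obtain ⟨x, hxF, hx⟩ := ha n
        obtain ⟨a', ha', rfl⟩ := hx
        exact ⟨a', ha', hxF⟩
      have hbK : ∀ n, ∃ b' : K, b' ∈ Metric.closedBall (u (m n)) (1/(n+1)) ∧ (b' : X) ∈ G ω := by
        intro n
        obtain ⟨x, hxG, hx⟩ := hb n
        obtain ⟨b'', hb', rfl⟩ := hx
        exact ⟨b'', hb', hxG⟩
      choose a' ha'ball ha'F using haK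
      choose b' hb'ball hb'G using hbK
      have hdist : ∀ n, dist (a' n) (b' n) ≤ 2/(n+1) := by
        intro n
        calc dist (a' n) (b' n) ≤ dist (a' n) (u (m n)) + dist (u (m n)) (b' n) := dist_triangle _ _ _
        _ ≤ 1/(n+1) + 1/(n+1) := add_le_add (ha'ball n) (by rw [dist_comm]; exact hb'ball n)
        _ = 2/(n+1) := by ring
      obtain ⟨c, -, φ, hφ, hconv⟩ := isCompact_univ.tendsto_subseq (fun n => Set.mem_univ (a' n))
      have hconvb : Filter.Tendsto (fun k => b' (φ k)) Filter.atTop (nhds c) := by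
        refine hconv.congr_dist ?_
        have : ∀ k, dist ((a' ∘ φ) k) (b' (φ k)) = dist (a' (φ k)) (b' (φ k)) := fun k => rfl
        simp only [this]
        refine squeeze_zero (f := fun k => dist (a' (φ k)) (b' (φ k))) (g := fun k => 2/((k:ℝ)+1)) (fun k => dist_nonneg) (fun k => ?_) ?_
        · refine (hdist (φ k)).trans ?_
          have hk : (k:ℝ) + 1 ≤ (φ k : ℝ) + 1 := by
            have h2 : k ≤ φ k := hφ.le_apply
            exact_mod_cast Nat.succ_le_succ h2
          have hpos : (0:ℝ) < (k:ℝ) + 1 := by positivity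
          exact div_le_div_of_nonneg_left (by norm_num) hpos hk
        · have h1 : Filter.Tendsto (fun k : ℕ => 1/((k:ℝ)+1)) Filter.atTop (nhds 0) :=
            tendsto_one_div_add_atTop_nhds_zero_nat
          have := h1.const_mul 2
          simpa [mul_one_div, div_eq_mul_inv] using this
      have hcF : (c : X) ∈ F ω :=
        (hFcl ω).mem_of_tendsto ((continuous_subtype_val.tendsto c).comp hconv)
          (Filter.Eventually.of_forall fun k => ha'F (φ k))
      have hcG : (c : X) ∈ G ω :=
        (hGcl ω).mem_of_tendsto ((continuous_subtype_val.tendsto c).comp hconvb)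
          (Filter.Eventually.of_forall fun k => hb'G (φ k))
      exact ⟨c, ⟨hcF, hcG⟩, c.2⟩
  rw [key]
  exact MeasurableSet.iInter fun n => MeasurableSet.iUnion fun m =>
    ((hF _ (hCcomp m n)).inter (hG _ (hCcomp m n)))
end

section
/- Let Ω be a measurable space and X a Hausdorff topological space in which every compact subset is second countable in the relative topology. If F₁, F₂, … : Ω → X is a sequence of closed-valued compact-measurable multifunctions, then the multifunction ω ↦ ⋂_{n≥1} Fₙ(ω) is compact-measurable. -/
open TopologicalSpace Set

/-!
A compact `K ⊆ X` is a compact Hausdorff, hence regular, space with a countable base `𝓑`.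
By regularity, a point of `K` outside some `Fₙ(ω)` has a basic neighbourhood whose closure
misses that `Fₙ(ω)`, so by compactness `⋂ₙ Fₙ(ω)` misses `K` iff `K` is covered by finitely many
sets of `𝓑` whose closures each miss some `Fₙ(ω)`. These closures are compact in `X`, and there
are only countably many finite subsets of `𝓑`, so this describes the set of `ω` with
`⋂ₙ Fₙ(ω) ∩ K ≠ ∅` by countably many operations on the measurable sets `Fₙ⁻¹(C)`.
-/

theorem TopologicalSpace.IsTopologicalBasis.nonempty_iInter_inter_iff {Y ι : Type*}
    [TopologicalSpace Y] [RegularSpace Y] {𝓑 : Set (Set Y)} (h𝓑 : IsTopologicalBasis 𝓑)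
    {A : ι → Set Y} (hA : ∀ i, IsClosed (A i)) {K : Set Y} (hK : IsCompact K) :
    ((⋂ i, A i) ∩ K).Nonempty ↔
      ∀ S, S.Finite → S ⊆ 𝓑 → K ⊆ ⋃₀ S → ∃ b ∈ S, ∀ i, (A i ∩ closure b).Nonempty := by
  constructor
  · rintro ⟨x, hxA, hxK⟩ S - - hSK
    obtain ⟨b, hbS, hxb⟩ := hSK hxK
    exact ⟨b, hbS, fun i => ⟨x, mem_iInter.mp hxA i, subset_closure hxb⟩⟩
  · contrapose!
    intro hempty
    have hcover : K ⊆ ⋃ b ∈ {b ∈ 𝓑 | ∃ i, Disjoint (A i) (closure b)}, b := by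
      intro x hxK
      obtain ⟨i, hxi⟩ : ∃ i, x ∉ A i := by
        by_contra! h
        exact hempty.subset ⟨mem_iInter.mpr h, hxK⟩
      obtain ⟨b, hb𝓑, hxb, hbA⟩ := h𝓑.exists_closure_subset ((hA i).isOpen_compl.mem_nhds hxi)
      exact mem_biUnion ⟨hb𝓑, i, disjoint_of_subset_right hbA disjoint_compl_right⟩ hxb
    obtain ⟨S, hS, hSfin, hSK⟩ :=
      hK.elim_finite_subcover_image (fun b hb => h𝓑.isOpen hb.1) hcover
    refine ⟨S, hSfin, fun b hb => (hS hb).1, by rwa [sUnion_eq_biUnion], fun b hb => ?_⟩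
    obtain ⟨i, hi⟩ := (hS hb).2
    exact ⟨i, disjoint_iff_inter_eq_empty.mp hi⟩

/-- The intersection of a sequence of closed-valued compact-measurable multifunctions
into a Hausdorff space with second countable compacts is compact-measurable. -/
theorem stmt_2 {Ω X : Type*} [MeasurableSpace Ω] [TopologicalSpace X] [T2Space X]
    (hX : ∀ K : Set X, IsCompact K → SecondCountableTopology K)
    (F : ℕ → Ω → Set X)
    (hFcl : ∀ n ω, IsClosed (F n ω))
    (hF : ∀ n, ∀ K : Set X, IsCompact K → MeasurableSet {ω | (F n ω ∩ K).Nonempty}) :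
    ∀ K : Set X, IsCompact K → MeasurableSet {ω | ((⋂ n, F n ω) ∩ K).Nonempty} := by
  intro K hK
  have := hX K hK
  have := isCompact_iff_compactSpace.mp hK
  have key : {ω | ((⋂ n, F n ω) ∩ K).Nonempty} =
      ⋂ S ∈ {S | S.Finite ∧ S ⊆ countableBasis K ∧ univ ⊆ ⋃₀ S}, ⋃ b ∈ S,
        ⋂ n, {ω | (F n ω ∩ Subtype.val '' closure b).Nonempty} := by
    ext ω
    have := (isBasis_countableBasis K).nonempty_iInter_inter_iff
      (fun n => (hFcl n ω).preimage continuous_subtype_val) isCompact_univ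
    simp only [mem_ofPred_eq, mem_iUnion₂, mem_iInter]
    rw [inter_comm, ← Subtype.preimage_coe_nonempty, preimage_iInter, ← inter_univ (⋂ n, _), this]
    simp only [← image_preimage_inter, image_nonempty, and_imp, exists_prop]
  rw [key]
  refine MeasurableSet.biInter ?_ fun S hS => .biUnion hS.1.countable fun b _ => .iInter fun n =>
    hF n _ (isClosed_closure.isCompact.image continuous_subtype_val)
  refine (countable_ofPred_finite_subset (countable_countableBasis K)).mono ?_
  exact fun S hS => ⟨hS.1, hS.2.1⟩
end

section
/- Let Ω be a measurable space, let S be a Souslin space (a metrizable topological space that is the image of a Polish space under a continuous map), and let X be a Hausdorff topological space in which every compact subset is second countable in the relative topology. Let {F_s}_{s∈S} be a family of closed-valued multifunctions F_s : Ω → X such that the multifunction (ω, s) ↦ F_s(ω) on Ω × S (with the product σ-algebra of the σ-algebra on Ω and the Borel σ-algebra of S) is compact-measurable. Then the multifunction ω ↦ ⋂_{s∈S} F_s(ω) is universally compact-measurable. -/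
/-!
Fix a compact `K`, a metric on `K` and a countable dense `D ⊆ K`. By compactness, `⋂ s, F s ω`
meets `K` iff for every `m` some closed ball `B ⊆ K` of radius `1 / (m + 1)` centred in `D` meets
every `F s ω`. For a fixed ball, the set of such `ω` is the complement of the projection to `Ω` of
the measurable set `{(ω, s) | F s ω ∩ B = ∅}`, so it suffices that projections of measurable sets
along a Souslin space are universally measurable. Pulling back to Baire space and coding the
countably many rectangles that generate the set by a measurable map `Ω → (ℕ → Bool)` turns such a
projection into the preimage of an analytic set, and analytic sets are universally measurable:
the range of a continuous `f` on Baire space is approximated from inside, up to any `ε`, by a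
closed set of the form `⋂ n, closure (f '' {x | ∀ i < n, x i ≤ N i})`.
-/

open MeasureTheory MeasurableSpace Set Filter Topology Metric

theorem MeasurableSpace.exists_countable_subset_measurableSet_generateFrom {α : Type*}
    {𝒮 : Set (Set α)} {s : Set α} (hs : MeasurableSet[generateFrom 𝒮] s) :
    ∃ T ⊆ 𝒮, T.Countable ∧ MeasurableSet[generateFrom T] s := by
  induction s, hs using generateFrom_induction with
  | hC u hu => exact ⟨{u}, singleton_subset_iff.2 hu, countable_singleton u,
      measurableSet_generateFrom rfl⟩
  | empty => exact ⟨∅, empty_subset _, countable_empty, @MeasurableSet.empty _ (generateFrom ∅)⟩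
  | compl u _ ih =>
    obtain ⟨T, hT, hTc, hu⟩ := ih
    exact ⟨T, hT, hTc, hu.compl⟩
  | iUnion u _ ih =>
    choose T hT hTc hu using ih
    exact ⟨⋃ n, T n, iUnion_subset hT, countable_iUnion hTc,
      .iUnion fun n => generateFrom_mono (subset_iUnion T n) _ (hu n)⟩

open scoped Classical in
theorem MeasurableSet.exists_eq_preimage_prodMap {Ω β : Type*} [MeasurableSpace Ω]
    [MeasurableSpace β]
    {E : Set (Ω × β)} (hE : MeasurableSet E) :
    ∃ g : Ω → ℕ → Bool, Measurable g ∧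
      ∃ M : Set ((ℕ → Bool) × β), MeasurableSet M ∧ E = Prod.map g id ⁻¹' M := by
  rw [← generateFrom_prod] at hE
  obtain ⟨T, hT, hTc, hET⟩ := exists_countable_subset_measurableSet_generateFrom hE
  have hempty : (∅ : Set Ω) ×ˢ (∅ : Set β) ∈
      image2 (· ×ˢ ·) {s : Set Ω | MeasurableSet s} {t : Set β | MeasurableSet t} :=
    mem_image2_of_mem MeasurableSet.empty MeasurableSet.empty
  obtain ⟨t, ht⟩ := (hTc.insert (∅ ×ˢ ∅)).exists_eq_range (insert_nonempty _ _)
  have hrect (n : ℕ) : ∃ A, MeasurableSet A ∧ ∃ B, MeasurableSet B ∧ A ×ˢ B = t n :=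
    insert_subset hempty hT (ht ▸ mem_range_self n)
  choose A hA B hB hAB using hrect
  -- `E` is measurable for the σ-algebra generated by the rectangles `A n ×ˢ B n`,
  -- which is pulled back from `(ℕ → Bool) × β` by `g × id`
  let g : Ω → ℕ → Bool := fun ω n => decide (ω ∈ A n)
  have hg : Measurable g :=
    measurable_pi_lambda _ fun n => measurable_to_bool (by convert hA n; ext; simp [g])
  have hle : generateFrom (range t) ≤ MeasurableSpace.comap (Prod.map g id) inferInstance := by
    refine generateFrom_le ?_
    rintro _ ⟨n, rfl⟩
    refine ⟨((fun x : ℕ → Bool => x n) ⁻¹' {true}) ×ˢ B n,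
      ((measurable_pi_apply n) (measurableSet_singleton true)).prod (hB n), ?_⟩
    rw [← hAB n]
    ext ⟨ω, y⟩
    simp [g]
  obtain ⟨M, hM, hEM⟩ := hle E (generateFrom_mono (ht ▸ subset_insert _ _) _ hET)
  exact ⟨g, hg, M, hM, hEM.symm⟩

theorem MeasureTheory.nullMeasurableSet_of_forall_lt_exists_measurableSet_subset
    {α : Type*} [MeasurableSpace α] {μ : Measure α} {s : Set α} (hs : μ s ≠ ⊤)
    (h : ∀ a < μ s, ∃ t ⊆ s, MeasurableSet t ∧ a ≤ μ t) : NullMeasurableSet s μ := by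
  rcases eq_zero_or_pos (μ s) with h0 | hpos
  · exact NullMeasurableSet.of_null h0
  obtain ⟨a, -, ha, hlim⟩ := exists_seq_strictMono_tendsto' hpos
  choose t hts htm hat using fun n => h (a n) (ha n).2
  have hU : μ s ≤ μ (⋃ n, t n) :=
    le_of_tendsto' hlim fun n => (hat n).trans (measure_mono (subset_iUnion t n))
  exact (MeasurableSet.iUnion htm).nullMeasurableSet.congr
    (ae_eq_of_subset_of_measure_ge (iUnion_subset hts) hU
      (MeasurableSet.iUnion htm).nullMeasurableSet hs)

def prefixBox (l : ℕ → ℕ) (n : ℕ) : Set (ℕ → ℕ) := {x | ∀ i < n, x i ≤ l i}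

namespace prefixBox

@[simp]
theorem zero (l : ℕ → ℕ) : prefixBox l 0 = univ := by
  ext x; simp [prefixBox]

theorem antitone (l : ℕ → ℕ) : Antitone (prefixBox l) :=
  fun _ _ hmn _ hx i hi => hx i (hi.trans_le hmn)

theorem congr {l l' : ℕ → ℕ} {n : ℕ} (h : ∀ i < n, l i = l' i) :
    prefixBox l n = prefixBox l' n := by
  ext x
  exact forall₂_congr fun i hi => by rw [h i hi]

theorem monotone_update (l : ℕ → ℕ) (n : ℕ) :
    Monotone fun k => prefixBox (Function.update l n k) (n + 1) := by
  intro k k' hk x hx i hi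
  rcases eq_or_ne i n with rfl | hin
  · simpa using (by simpa using hx i hi : x i ≤ k).trans hk
  · simpa [hin] using hx i hi

theorem iUnion_update (l : ℕ → ℕ) (n : ℕ) :
    ⋃ k, prefixBox (Function.update l n k) (n + 1) = prefixBox l n := by
  ext x
  simp only [mem_iUnion, prefixBox, mem_ofPred_eq]
  constructor
  · rintro ⟨k, hk⟩ i hi
    simpa [hi.ne] using hk i (by omega)
  · intro h
    refine ⟨x n, fun i hi => ?_⟩
    rcases (Nat.lt_succ_iff_lt_or_eq.1 hi) with hi | rfl
    · simpa [hi.ne] using h i hi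
    · simp

end prefixBox

theorem isCompact_setOf_forall_le (M : ℕ → ℕ) : IsCompact {x : ℕ → ℕ | ∀ i, x i ≤ M i} := by
  simpa [Set.pi, ← Iic_def] using isCompact_univ_pi fun i => (finite_Iic (M i)).isCompact

/-- The bounds `N 0, N 1, …` are chosen one at a time, by continuity from below along
`prefixBox.iUnion_update`. -/
theorem exists_forall_lt_measure_image_prefixBox {α : Type*} [MeasurableSpace α]
    (f : (ℕ → ℕ) → α) (ν : Measure α) {a : ENNReal} (ha : a < ν (range f)) :
    ∃ N : ℕ → ℕ, ∀ n, a < ν (f '' prefixBox N n) := by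
  have step (l : ℕ → ℕ) (n : ℕ) : ∃ k, a < ν (f '' prefixBox l n) →
      a < ν (f '' prefixBox (Function.update l n k) (n + 1)) := by
    have hsup : ν (f '' prefixBox l n) =
        ⨆ k, ν (f '' prefixBox (Function.update l n k) (n + 1)) := by
      rw [← prefixBox.iUnion_update, image_iUnion]
      exact Monotone.measure_iUnion fun _ _ hk => image_mono (prefixBox.monotone_update l n hk)
    rw [hsup, lt_iSup_iff]
    by_cases h : ∃ k, a < ν (f '' prefixBox (Function.update l n k) (n + 1))
    · obtain ⟨k, hk⟩ := h
      exact ⟨k, fun _ => hk⟩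
    · exact ⟨0, fun h' => absurd h' h⟩
  choose k hk using step
  let L : ℕ → ℕ → ℕ := fun n =>
    Nat.rec (motive := fun _ => ℕ → ℕ) 0 (fun n l => Function.update l n (k l n)) n
  have hL (n : ℕ) : a < ν (f '' prefixBox (L n) n) := by
    induction n with
    | zero => simpa using ha
    | succ n ih => exact hk _ _ ih
  have hL_stable (i n : ℕ) (hi : i < n) : L n i = L (i + 1) i := by
    induction n with
    | zero => omega
    | succ n ih =>
      rcases Nat.lt_succ_iff_lt_or_eq.1 hi with hi | rfl
      · simp only [L, Function.update_of_ne hi.ne]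
        exact ih hi
      · rfl
  refine ⟨fun i => L (i + 1) i, fun n => ?_⟩
  rw [prefixBox.congr fun i hi => (hL_stable i n hi).symm]
  exact hL n

theorem iInter_closure_image_prefixBox_subset_range {α : Type*} [TopologicalSpace α] [T2Space α]
    [FirstCountableTopology α] {f : (ℕ → ℕ) → α} (hf : Continuous f) (N : ℕ → ℕ) :
    ⋂ n, closure (f '' prefixBox N n) ⊆ range f := by
  intro y hy
  obtain ⟨U, hU⟩ := (𝓝 y).exists_antitone_basis
  have hsel (n : ℕ) : ∃ x ∈ prefixBox N n, f x ∈ U n := by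
    obtain ⟨_, hU, x, hx, rfl⟩ :=
      mem_closure_iff_nhds.1 (mem_iInter.1 hy n) (U n) (hU.mem n)
    exact ⟨x, hx, hU⟩
  choose x hxN hxU using hsel
  -- coordinate `i` of `x n` is bounded by `N i` once `n > i`
  let M : ℕ → ℕ := fun i => max (N i) ((Finset.range (i + 1)).sup fun n => x n i)
  have hxM (n : ℕ) : x n ∈ {z : ℕ → ℕ | ∀ i, z i ≤ M i} := by
    intro i
    rcases lt_or_ge i n with h | h
    · exact le_max_of_le_left (hxN n i h)
    · exact le_max_of_le_right
        (Finset.le_sup (f := fun n => x n i) (Finset.mem_range.2 (by omega)))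
  obtain ⟨z, -, φ, hφ, hz⟩ := (isCompact_setOf_forall_le M).tendsto_subseq hxM
  exact ⟨z, tendsto_nhds_unique ((hf.tendsto z).comp hz)
    ((hU.tendsto hxU).comp hφ.tendsto_atTop)⟩

theorem MeasureTheory.AnalyticSet.nullMeasurableSet {α : Type*} [TopologicalSpace α] [T2Space α]
    [FirstCountableTopology α] [MeasurableSpace α] [OpensMeasurableSpace α] {s : Set α}
    (hs : AnalyticSet s) (μ : Measure α) [IsFiniteMeasure μ] : NullMeasurableSet s μ := by
  rw [AnalyticSet] at hs
  rcases hs with rfl | ⟨f, hf, rfl⟩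
  · exact nullMeasurableSet_empty
  refine nullMeasurableSet_of_forall_lt_exists_measurableSet_subset (measure_ne_top μ _)
    fun a ha => ?_
  obtain ⟨N, hN⟩ := exists_forall_lt_measure_image_prefixBox f μ ha
  refine ⟨⋂ n, closure (f '' prefixBox N n), iInter_closure_image_prefixBox_subset_range hf N,
    .iInter fun n => isClosed_closure.measurableSet, ?_⟩
  rw [Antitone.measure_iInter (fun _ _ h => closure_mono (image_mono (prefixBox.antitone N h)))
    (fun n => isClosed_closure.measurableSet.nullMeasurableSet) ⟨0, measure_ne_top μ _⟩]
  exact le_iInf fun n => (hN n).le.trans (measure_mono subset_closure)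

theorem MeasurableSet.nullMeasurableSet_fst_image {Ω β : Type*} [MeasurableSpace Ω]
    [MeasurableSpace β] [StandardBorelSpace β] {E : Set (Ω × β)} (hE : MeasurableSet E)
    (μ : Measure Ω) [IsFiniteMeasure μ] : NullMeasurableSet (Prod.fst '' E) μ := by
  obtain ⟨g, hg, M, hM, rfl⟩ := hE.exists_eq_preimage_prodMap
  have hfst : Prod.fst '' (Prod.map g id ⁻¹' M) = g ⁻¹' (Prod.fst '' M) := by
    ext ω
    simp only [mem_image, mem_preimage, Prod.map, Prod.exists, exists_and_right, exists_eq_right,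
      id]
  let := upgradeStandardBorel β
  rw [hfst]
  exact ((hM.analyticSet_image measurable_fst).nullMeasurableSet (μ.map g)).preimage
    (hg.quasiMeasurePreserving μ)

theorem MeasurableSet.nullMeasurableSet_fst_image_of_analyticSet_univ {Ω S : Type*}
    [MeasurableSpace Ω] [TopologicalSpace S] [MeasurableSpace S] [BorelSpace S]
    (hS : AnalyticSet (univ : Set S)) {E : Set (Ω × S)} (hE : MeasurableSet E)
    (μ : Measure Ω) [IsFiniteMeasure μ] : NullMeasurableSet (Prod.fst '' E) μ := by
  rw [AnalyticSet] at hS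
  rcases hS with hS | ⟨v, hv, hvs⟩
  · have : IsEmpty S := univ_eq_empty_iff.1 hS
    simp [eq_empty_of_isEmpty E]
  · have hsurj : Function.Surjective (Prod.map (id : Ω → Ω) v) :=
      Function.surjective_id.prodMap (range_eq_univ.1 hvs)
    rw [← hsurj.image_preimage E, image_image]
    exact (hE.preimage (measurable_id.prodMap hv.measurable)).nullMeasurableSet_fst_image μ

theorem MeasurableSet.nullMeasurableSet_setOf_forall_of_analyticSet_univ {Ω S : Type*}
    [MeasurableSpace Ω] [TopologicalSpace S] [MeasurableSpace S] [BorelSpace S]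
    (hS : AnalyticSet (univ : Set S)) {P : Set (Ω × S)} (hP : MeasurableSet P)
    (μ : Measure Ω) [IsFiniteMeasure μ] : NullMeasurableSet {ω | ∀ s, (ω, s) ∈ P} μ := by
  have h : {ω | ∀ s, (ω, s) ∈ P} = (Prod.fst '' Pᶜ)ᶜ := by ext; simp
  rw [h]
  exact (hP.compl.nullMeasurableSet_fst_image_of_analyticSet_univ hS μ).compl

theorem iInter_nonempty_iff_forall_exists_closedBall {Y ι : Type*} [MetricSpace Y]
    [CompactSpace Y] {C : ι → Set Y} (hC : ∀ i, IsClosed (C i)) {D : Set Y} (hD : Dense D) :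
    (⋂ i, C i).Nonempty ↔
      ∀ m : ℕ, ∃ q ∈ D, ∀ i, (closedBall q (1 / (m + 1)) ∩ C i).Nonempty := by
  constructor
  · rintro ⟨x, hx⟩ m
    obtain ⟨q, hqD, hq⟩ := hD.exists_dist_lt x (Nat.one_div_pos_of_nat : (0 : ℝ) < 1 / (m + 1))
    exact ⟨q, hqD, fun i => ⟨x, mem_closedBall.2 hq.le, mem_iInter.1 hx i⟩⟩
  · intro h
    choose q hqD hq using h
    obtain ⟨x, -, φ, hφ, hx⟩ := isCompact_univ.tendsto_subseq fun m => mem_univ (q m)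
    refine ⟨x, mem_iInter.2 fun i =>
      (hC i).closure_subset (Metric.mem_closure_iff.2 fun ε hε => ?_)⟩
    have hsmall : ∀ᶠ k in atTop, 1 / ((φ k : ℝ) + 1) + dist (q (φ k)) x < ε := by
      have hr := (tendsto_one_div_add_atTop_nhds_zero_nat (𝕜 := ℝ)).comp hφ.tendsto_atTop
      have hd := tendsto_iff_dist_tendsto_zero.1 hx
      simpa using (hr.add hd).eventually (gt_mem_nhds (by simpa using hε))
    obtain ⟨k, hk⟩ := hsmall.exists
    obtain ⟨b, hb, hbC⟩ := hq (φ k) i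
    refine ⟨b, hbC, ?_⟩
    calc dist x b ≤ dist (q (φ k)) x + dist (q (φ k)) b := dist_triangle_left _ _ _
      _ < ε := by linarith [mem_closedBall.1 hb, dist_comm b (q (φ k))]

open TopologicalSpace

theorem stmt_3_general {Ω : Type*} [MeasurableSpace Ω]
    {S : Type*} [TopologicalSpace S] [MeasurableSpace S] [BorelSpace S]
    (hS : ∃ (P : Type) (tP : TopologicalSpace P), @PolishSpace P tP ∧
      ∃ f : P → S, @Continuous P S tP _ f ∧ Function.Surjective f)
    {X : Type*} [TopologicalSpace X] [T2Space X]
    (hX : ∀ K : Set X, IsCompact K → SecondCountableTopology K)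
    (F : S → Ω → Set X)
    (hFcl : ∀ s ω, IsClosed (F s ω))
    (hF : ∀ K : Set X, IsCompact K →
      MeasurableSet {p : Ω × S | (F p.2 p.1 ∩ K).Nonempty}) :
    ∀ K : Set X, IsCompact K → ∀ (μ : Measure Ω), IsFiniteMeasure μ →
      NullMeasurableSet {ω | ((⋂ s, F s ω) ∩ K).Nonempty} μ := by
  intro K hK μ _
  have hSuniv : AnalyticSet (univ : Set S) := by
    obtain ⟨P, tP, hP, f, hf, hfs⟩ := hS
    exact analyticSet_iff_exists_polishSpace_range.2 ⟨P, tP, hP, f, hf, hfs.range_eq⟩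
  have := hX K hK
  have := isCompact_iff_compactSpace.1 hK
  let := metrizableSpaceMetric K
  obtain ⟨D, hDc, hD⟩ := exists_countable_dense K
  have hball (q : K) (r : ℝ) : IsCompact (((↑) : K → X) '' closedBall q r) :=
    isClosed_closedBall.isCompact.image continuous_subtype_val
  have hchar : {ω | ((⋂ s, F s ω) ∩ K).Nonempty} = ⋂ m : ℕ, ⋃ q ∈ D,
      {ω | ∀ s, (F s ω ∩ (↑) '' closedBall q (1 / (m + 1))).Nonempty} := by
    ext ω
    have := iInter_nonempty_iff_forall_exists_closedBall
      (fun s => (hFcl s ω).preimage continuous_subtype_val) hD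
    simp only [← preimage_iInter, Subtype.preimage_coe_nonempty, ← image_inter_nonempty_iff,
      inter_comm (K : Set X)] at this
    simpa only [mem_ofPred_eq, mem_iInter, mem_iUnion, exists_prop, inter_comm (F _ ω)] using this
  rw [hchar]
  exact .iInter fun m => .biUnion hDc fun q _ =>
    (hF _ (hball q _)).nullMeasurableSet_setOf_forall_of_analyticSet_univ hSuniv μ

/-- Souslin intersection theorem: the intersection of a compact-measurable Souslin
family of closed-valued multifunctions into a Hausdorff space with second countable
compacts is universally compact-measurable. -/
theorem stmt_3 {Ω : Type*} [MeasurableSpace Ω]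
    {S : Type*} [TopologicalSpace S] [MetrizableSpace S] [MeasurableSpace S] [BorelSpace S]
    (hS : ∃ (P : Type) (tP : TopologicalSpace P), @PolishSpace P tP ∧
      ∃ f : P → S, @Continuous P S tP _ f ∧ Function.Surjective f)
    {X : Type*} [TopologicalSpace X] [T2Space X]
    (hX : ∀ K : Set X, IsCompact K → SecondCountableTopology K)
    (F : S → Ω → Set X)
    (hFcl : ∀ s ω, IsClosed (F s ω))
    (hF : ∀ K : Set X, IsCompact K →
      MeasurableSet {p : Ω × S | (F p.2 p.1 ∩ K).Nonempty}) :
    ∀ K : Set X, IsCompact K → ∀ (μ : Measure Ω), IsFiniteMeasure μ →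
      NullMeasurableSet {ω | ((⋂ s, F s ω) ∩ K).Nonempty} μ :=
  stmt_3_general hS hX F hFcl hF
end

section
/- Let Ω be a measurable space and X a second countable Hausdorff topological space. If F₁, F₂, … : Ω → X is a sequence of compact-valued closed-measurable multifunctions, then the multifunction ω ↦ ⋂_{n≥1} Fₙ(ω) is closed-measurable. -/
open TopologicalSpace

/-- A compact set inside an open set can be covered by finitely many basis elements
inside the open set. -/
lemma aux_finite_basis_cover {X : Type*} [TopologicalSpace X] {b : Set (Set X)}
    (hb : IsTopologicalBasis b) {K U : Set X} (hK : IsCompact K) (hU : IsOpen U)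
    (hKU : K ⊆ U) :
    ∃ s : Set (Set X), s ⊆ b ∧ s.Finite ∧ K ⊆ ⋃₀ s ∧ ⋃₀ s ⊆ U := by
  set c : Set (Set X) := {B ∈ b | B ⊆ U} with hc
  have hUc : U = ⋃₀ c := hb.open_eq_sUnion' hU
  have hcover : K ⊆ ⋃ B : c, (B : Set X) := by
    intro x hx
    rcases (hUc ▸ hKU hx) with ⟨B, hB, hxB⟩
    exact Set.mem_iUnion.2 ⟨⟨B, hB⟩, hxB⟩
  obtain ⟨d, hd⟩ := hK.elim_finite_subcover (fun B : c => (B : Set X))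
    (fun B => hb.isOpen B.2.1) hcover
  refine ⟨Subtype.val '' (d : Set c), ?_, (d.finite_toSet.image _), ?_, ?_⟩
  · rintro B ⟨⟨B', hB'⟩, -, rfl⟩; exact hB'.1
  · intro x hx
    rcases Set.mem_iUnion₂.1 (hd hx) with ⟨B, hB, hxB⟩
    exact ⟨B.1, ⟨B, hB, rfl⟩, hxB⟩
  · rintro x ⟨B, ⟨⟨B', hB'⟩, -, rfl⟩, hxB⟩
    exact hB'.2 hxB

/-- Measurability of `{ω | F ω ⊆ U}` for open `U`. -/
lemma aux_subset_meas {Ω X : Type*} [MeasurableSpace Ω] [TopologicalSpace X]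
    (F : Ω → Set X)
    (hF : ∀ C : Set X, IsClosed C → MeasurableSet {ω | (F ω ∩ C).Nonempty})
    {U : Set X} (hU : IsOpen U) : MeasurableSet {ω | F ω ⊆ U} := by
  have : {ω | F ω ⊆ U} = {ω | (F ω ∩ Uᶜ).Nonempty}ᶜ := by
    ext ω
    simp [Set.inter_compl_nonempty_iff]
  rw [this]
  exact (hF Uᶜ hU.isClosed_compl).compl

/-- The intersection of two compact-valued closed-measurable multifunctions is
closed-measurable. -/
lemma aux_binary {Ω X : Type*} [MeasurableSpace Ω] [TopologicalSpace X] [T2Space X]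
    [SecondCountableTopology X]
    (F G : Ω → Set X)
    (hFcp : ∀ ω, IsCompact (F ω)) (hGcp : ∀ ω, IsCompact (G ω))
    (hF : ∀ C : Set X, IsClosed C → MeasurableSet {ω | (F ω ∩ C).Nonempty})
    (hG : ∀ C : Set X, IsClosed C → MeasurableSet {ω | (G ω ∩ C).Nonempty}) :
    ∀ C : Set X, IsClosed C → MeasurableSet {ω | (F ω ∩ G ω ∩ C).Nonempty} := by
  intro C hC
  obtain ⟨b, hbc, -, hb⟩ := exists_countable_basis X
  set T : Set (Set (Set X) × Set (Set X)) :=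
    {p | (p.1.Finite ∧ p.1 ⊆ b) ∧ (p.2.Finite ∧ p.2 ⊆ b) ∧ Disjoint (⋃₀ p.1) (⋃₀ p.2)}
    with hT
  have hTc : T.Countable := by
    apply Set.Countable.mono ?_
      ((Set.countable_setOf_finite_subset hbc).prod (Set.countable_setOf_finite_subset hbc))
    rintro ⟨s, t⟩ ⟨hs, ht, -⟩
    exact ⟨hs, ht⟩
  have key : {ω | (F ω ∩ G ω ∩ C).Nonempty}ᶜ =
      ⋃ p ∈ T, ({ω | F ω ⊆ ⋃₀ p.1} ∩ {ω | G ω ∩ C ⊆ ⋃₀ p.2}) := by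
    ext ω
    simp only [Set.mem_compl_iff, Set.mem_setOf_eq, Set.not_nonempty_iff_eq_empty,
      Set.mem_iUnion, Set.mem_inter_iff]
    constructor
    · intro hemp
      have hdisj : Disjoint (F ω) (G ω ∩ C) := by
        rw [Set.disjoint_iff_inter_eq_empty, ← Set.inter_assoc]
        exact hemp
      obtain ⟨U, V, hU, hV, hFU, hGV, hUV⟩ :=
        SeparatedNhds.of_isCompact_isCompact (hFcp ω) ((hGcp ω).inter_right hC) hdisj
      obtain ⟨s, hsb, hsf, hFs, hsU⟩ := aux_finite_basis_cover hb (hFcp ω) hU hFU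
      obtain ⟨t, htb, htf, hGt, htV⟩ :=
        aux_finite_basis_cover hb ((hGcp ω).inter_right hC) hV hGV
      exact ⟨(s, t), ⟨⟨hsf, hsb⟩, ⟨htf, htb⟩, (hUV.mono hsU htV)⟩, hFs, hGt⟩
    · rintro ⟨p, ⟨-, -, hdisj⟩, hFs, hGt⟩
      rw [← Set.subset_empty_iff]
      intro x hx
      exact (Set.disjoint_iff_inter_eq_empty.1 hdisj) ▸
        ⟨hFs (hx.1.1), hGt ⟨hx.1.2, hx.2⟩⟩
  have : {ω | (F ω ∩ G ω ∩ C).Nonempty} =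
      (⋃ p ∈ T, ({ω | F ω ⊆ ⋃₀ p.1} ∩ {ω | G ω ∩ C ⊆ ⋃₀ p.2}))ᶜ := by
    rw [← key, compl_compl]
  rw [this]
  apply MeasurableSet.compl
  apply MeasurableSet.biUnion hTc
  rintro ⟨s, t⟩ ⟨⟨hsf, hsb⟩, ⟨htf, htb⟩, -⟩
  have hsO : IsOpen (⋃₀ s) := isOpen_sUnion fun B hB => hb.isOpen (hsb hB)
  have htO : IsOpen (⋃₀ t) := isOpen_sUnion fun B hB => hb.isOpen (htb hB)
  refine (aux_subset_meas F hF hsO).inter ?_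
  have : {ω | G ω ∩ C ⊆ ⋃₀ t} = {ω | (G ω ∩ (C ∩ (⋃₀ t)ᶜ)).Nonempty}ᶜ := by
    ext ω
    simp only [Set.mem_setOf_eq, Set.mem_compl_iff, Set.not_nonempty_iff_eq_empty,
      ← Set.inter_assoc, Set.inter_compl_nonempty_iff]
    tauto
  rw [this]
  exact (hG _ (hC.inter htO.isClosed_compl)).compl

/-- A countable intersection of closed-measurable compact-valued multifunctions into a
second countable Hausdorff space is closed-measurable. -/
theorem stmt_4 {Ω X : Type*} [MeasurableSpace Ω] [TopologicalSpace X] [T2Space X]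
    [SecondCountableTopology X]
    (F : ℕ → Ω → Set X)
    (hFcp : ∀ n ω, IsCompact (F n ω))
    (hF : ∀ n, ∀ C : Set X, IsClosed C → MeasurableSet {ω | (F n ω ∩ C).Nonempty}) :
    ∀ C : Set X, IsClosed C → MeasurableSet {ω | ((⋂ n, F n ω) ∩ C).Nonempty} := by
  set G : ℕ → Ω → Set X := fun n ω => ⋂ k ∈ Finset.range (n + 1), F k ω with hGdef
  have hGclosed : ∀ n ω, IsClosed (G n ω) :=
    fun n ω => isClosed_biInter fun k _ => (hFcp k ω).isClosed
  have hGcp : ∀ n ω, IsCompact (G n ω) := by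
    intro n ω
    apply (hFcp 0 ω).of_isClosed_subset (hGclosed n ω)
    exact Set.biInter_subset_of_mem (show (0:ℕ) ∈ (Finset.range (n+1) : Set ℕ) by simp)
  have hGsucc : ∀ n ω, G (n + 1) ω = F (n + 1) ω ∩ G n ω := by
    intro n ω
    simp only [hGdef, Finset.range_add_one (n := n + 1), Finset.set_biInter_insert]
  have hGmeas : ∀ n, ∀ C : Set X, IsClosed C → MeasurableSet {ω | (G n ω ∩ C).Nonempty} := by
    intro n
    induction n with
    | zero => simpa [hGdef] using hF 0
    | succ n ih =>
      intro C hC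
      have := aux_binary (fun ω => F (n + 1) ω) (fun ω => G n ω)
        (fun ω => hFcp (n + 1) ω) (fun ω => hGcp n ω) (hF (n + 1)) ih C hC
      simpa only [← hGsucc] using this
  intro C hC
  have hanti : ∀ n ω, G (n + 1) ω ⊆ G n ω := by
    intro n ω
    rw [hGsucc]; exact Set.inter_subset_right
  have hEq : {ω | ((⋂ n, F n ω) ∩ C).Nonempty} = ⋂ n, {ω | (G n ω ∩ C).Nonempty} := by
    ext ω
    simp only [Set.mem_setOf_eq, Set.mem_iInter]
    constructor
    · rintro ⟨x, hx1, hx2⟩ n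
      exact ⟨x, Set.mem_biInter fun k _ => Set.mem_iInter.1 hx1 k, hx2⟩
    · intro h
      have hiInter : (⋂ n, (G n ω ∩ C)).Nonempty := by
        apply IsCompact.nonempty_iInter_of_sequence_nonempty_isCompact_isClosed
          (fun n => G n ω ∩ C)
          (fun n => Set.inter_subset_inter_left C (hanti n ω)) h
          ((hGcp 0 ω).inter_right hC)
          (fun n => (hGclosed n ω).inter hC)
      obtain ⟨x, hx⟩ := hiInter
      simp only [Set.mem_iInter, Set.mem_inter_iff] at hx
      refine ⟨x, Set.mem_iInter.2 fun n => ?_, (hx 0).2⟩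
      exact Set.mem_iInter₂.1 (hx n).1 n (by simp)
  rw [hEq]
  exact MeasurableSet.iInter fun n => hGmeas n C hC
end

section
/- Let Ω be a measurable space and X a countably C-separated T1 topological space. If F₁, F₂, … : Ω → X is a sequence of compact-valued closed-measurable multifunctions, then the multifunction ω ↦ ⋂_{n≥1} Fₙ(ω) is closed-measurable. -/
open Set

section Aux
variable {Ω X : Type*} [MeasurableSpace Ω] [TopologicalSpace X] [T1Space X]
variable {𝒰 : Set (Set X)}

/-- In a C-separated T1 space, compact sets are closed. -/
theorem aux_compact_isClosed
    (hsep : ∀ K C : Set X, IsCompact K → IsClosed C → Disjoint K C →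
        ∃ U ∈ 𝒰, C ⊆ U ∧ U ∩ K = ∅)
    (h𝒰o : ∀ U ∈ 𝒰, IsOpen U)
    {K : Set X} (hK : IsCompact K) : IsClosed K := by
  rw [← isOpen_compl_iff, isOpen_iff_mem_nhds]
  intro x hx
  obtain ⟨U, hU𝒰, hxU, hUK⟩ := hsep K {x} hK isClosed_singleton
    (disjoint_singleton_right.mpr hx)
  refine Filter.mem_of_superset (((h𝒰o U hU𝒰).mem_nhds (hxU rfl))) ?_
  intro y hy hyK
  exact absurd (mem_inter hy hyK) (by simp [hUK])

set_option linter.unusedSectionVars false in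
/-- Hitting a set of the form `U ∩ C` (U open, C closed) is measurable. -/
theorem aux_hit_locally_closed
    (h𝒰c : 𝒰.Countable) (h𝒰o : ∀ U ∈ 𝒰, IsOpen U)
    (hsep : ∀ K C : Set X, IsCompact K → IsClosed C → Disjoint K C →
        ∃ U ∈ 𝒰, C ⊆ U ∧ U ∩ K = ∅)
    (G : Ω → Set X)
    (hG : ∀ C : Set X, IsClosed C → MeasurableSet {ω | (G ω ∩ C).Nonempty})
    {U C : Set X} (hU : IsOpen U) (hC : IsClosed C) :
    MeasurableSet {ω | (G ω ∩ (U ∩ C)).Nonempty} := by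
  have key : {ω | (G ω ∩ (U ∩ C)).Nonempty}
      = ⋃ W ∈ {W ∈ 𝒰 | Wᶜ ⊆ U}, {ω | (G ω ∩ (Wᶜ ∩ C)).Nonempty} := by
    ext ω
    simp only [mem_iUnion, mem_setOf_eq, mem_sep_iff]
    constructor
    · rintro ⟨x, hxG, hxU, hxC⟩
      obtain ⟨W, hW𝒰, hsub, hWx⟩ := hsep {x} Uᶜ isCompact_singleton hU.isClosed_compl
        (disjoint_singleton_left.mpr (by simpa using hxU))
      have hxW : x ∉ W := by
        intro hxW
        have : x ∈ W ∩ {x} := ⟨hxW, rfl⟩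
        rw [hWx] at this
        exact this
      exact ⟨W, ⟨hW𝒰, compl_subset_comm.mp hsub⟩, x, hxG, hxW, hxC⟩
    · rintro ⟨W, ⟨hW𝒰, hsub⟩, x, hxG, hxW, hxC⟩
      exact ⟨x, hxG, hsub hxW, hxC⟩
  rw [key]
  refine MeasurableSet.biUnion (h𝒰c.mono (sep_subset _ _)) ?_
  intro W hW
  exact hG _ (((h𝒰o W hW.1).isClosed_compl).inter hC)

/-- Binary intersections of compact-valued closed-measurable multifunctions are
closed-measurable. -/
theorem aux_binary_s6
    (h𝒰c : 𝒰.Countable) (h𝒰o : ∀ U ∈ 𝒰, IsOpen U)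
    (hsep : ∀ K C : Set X, IsCompact K → IsClosed C → Disjoint K C →
        ∃ U ∈ 𝒰, C ⊆ U ∧ U ∩ K = ∅)
    (G₁ G₂ : Ω → Set X)
    (hG₁cp : ∀ ω, IsCompact (G₁ ω)) (hG₂cp : ∀ ω, IsCompact (G₂ ω))
    (hG₁ : ∀ C : Set X, IsClosed C → MeasurableSet {ω | (G₁ ω ∩ C).Nonempty})
    (hG₂ : ∀ C : Set X, IsClosed C → MeasurableSet {ω | (G₂ ω ∩ C).Nonempty})
    {C : Set X} (hC : IsClosed C) :
    MeasurableSet {ω | (G₁ ω ∩ G₂ ω ∩ C).Nonempty} := by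
  have key : {ω | (G₁ ω ∩ G₂ ω ∩ C).Nonempty}ᶜ
      = ⋃ U ∈ 𝒰, ({ω | (G₂ ω ∩ Uᶜ).Nonempty}ᶜ ∩ {ω | (G₁ ω ∩ (U ∩ C)).Nonempty}ᶜ) := by
    ext ω
    simp only [mem_compl_iff, mem_iUnion, mem_inter_iff, mem_setOf_eq,
      inter_compl_nonempty_iff, not_not]
    constructor
    · intro h
      have hK₁ : IsCompact (G₁ ω ∩ C) := (hG₁cp ω).inter_right hC
      have hK₂ : IsClosed (G₂ ω) := aux_compact_isClosed hsep h𝒰o (hG₂cp ω)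
      have hdisj : Disjoint (G₁ ω ∩ C) (G₂ ω) := by
        rw [disjoint_iff_inter_eq_empty, ← not_nonempty_iff_eq_empty]
        intro ⟨x, ⟨hx1, hxC⟩, hx2⟩
        exact h ⟨x, ⟨hx1, hx2⟩, hxC⟩
      obtain ⟨U, hU𝒰, hsub, hemp⟩ := hsep _ _ hK₁ hK₂ hdisj
      refine ⟨U, hU𝒰, hsub, ?_⟩
      rintro ⟨x, hx1, hxU, hxC⟩
      exact absurd (mem_inter hxU (mem_inter hx1 hxC)) (by simp [hemp])
    · rintro ⟨U, hU𝒰, hsub, hemp⟩ ⟨x, ⟨hx1, hx2⟩, hxC⟩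
      exact hemp ⟨x, hx1, hsub hx2, hxC⟩
  rw [← compl_compl {ω | (G₁ ω ∩ G₂ ω ∩ C).Nonempty}, key]
  refine (MeasurableSet.biUnion h𝒰c ?_).compl
  intro U hU
  exact ((hG₂ _ ((h𝒰o U hU).isClosed_compl)).compl).inter
    (aux_hit_locally_closed h𝒰c h𝒰o hsep G₁ hG₁ (h𝒰o U hU) hC).compl

end Aux

/-- A countable intersection of closed-measurable compact-valued multifunctions into a
countably C-separated T1 space is closed-measurable. -/
theorem stmt_6 {Ω X : Type*} [MeasurableSpace Ω] [TopologicalSpace X] [T1Space X]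
    (hX : ∃ 𝒰 : Set (Set X), 𝒰.Countable ∧ (∀ U ∈ 𝒰, IsOpen U) ∧
      ∀ K C : Set X, IsCompact K → IsClosed C → Disjoint K C →
        ∃ U ∈ 𝒰, C ⊆ U ∧ U ∩ K = ∅)
    (F : ℕ → Ω → Set X)
    (hFcp : ∀ n ω, IsCompact (F n ω))
    (hF : ∀ n, ∀ C : Set X, IsClosed C → MeasurableSet {ω | (F n ω ∩ C).Nonempty}) :
    ∀ C : Set X, IsClosed C → MeasurableSet {ω | ((⋂ n, F n ω) ∩ C).Nonempty} := by
  obtain ⟨𝒰, h𝒰c, h𝒰o, hsep⟩ := hX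
  intro C hC
  -- finite intersections
  set H : ℕ → Ω → Set X := fun m ω => ⋂ n ∈ Finset.range (m + 1), F n ω with hHdef
  have hHsucc : ∀ m ω, H (m + 1) ω = H m ω ∩ F (m + 1) ω := by
    intro m ω
    simp only [hHdef, Finset.range_add_one]
    rw [Finset.set_biInter_insert, Set.inter_comm]
  have hH : ∀ m, (∀ ω, IsCompact (H m ω)) ∧
      (∀ C' : Set X, IsClosed C' → MeasurableSet {ω | (H m ω ∩ C').Nonempty}) := by
    intro m
    induction m with
    | zero =>
      constructor
      · intro ω; simpa [hHdef] using hFcp 0 ω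
      · intro C' hC'; simpa [hHdef] using hF 0 C' hC'
    | succ k ih =>
      constructor
      · intro ω
        rw [hHsucc]
        exact (ih.1 ω).inter_right (aux_compact_isClosed hsep h𝒰o (hFcp (k + 1) ω))
      · intro C' hC'
        have : {ω | (H (k + 1) ω ∩ C').Nonempty}
            = {ω | (H k ω ∩ F (k + 1) ω ∩ C').Nonempty} := by
          ext ω; simp only [Set.mem_setOf_eq, hHsucc]
        rw [this]
        exact aux_binary_s6 h𝒰c h𝒰o hsep (H k) (F (k + 1)) ih.1 (hFcp (k + 1)) ih.2
          (hF (k + 1)) hC'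
  -- reduce the countable intersection to finite ones
  have hHmono : ∀ m ω, H (m + 1) ω ⊆ H m ω := by
    intro m ω
    rw [hHsucc]; exact Set.inter_subset_left
  have hHiInter : ∀ ω, (⋂ m, H m ω) = ⋂ n, F n ω := by
    intro ω
    apply Set.Subset.antisymm
    · intro x hx
      refine Set.mem_iInter.mpr fun n => ?_
      have := Set.mem_iInter.mp hx n
      simp only [hHdef, Set.mem_iInter] at this
      exact this n (Finset.mem_range.mpr (Nat.lt_succ_self n))
    · intro x hx
      refine Set.mem_iInter.mpr fun m => ?_
      simp only [hHdef, Set.mem_iInter]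
      intro n _
      exact Set.mem_iInter.mp hx n
  have key : {ω | ((⋂ n, F n ω) ∩ C).Nonempty} = ⋂ m, {ω | (H m ω ∩ C).Nonempty} := by
    ext ω
    simp only [Set.mem_iInter, Set.mem_setOf_eq]
    constructor
    · rintro ⟨x, hx1, hx2⟩ m
      refine ⟨x, ?_, hx2⟩
      simp only [hHdef, Set.mem_iInter]
      intro n _
      exact Set.mem_iInter.mp hx1 n
    · intro h
      have hne : (⋂ m, H m ω ∩ C).Nonempty := by
        refine IsCompact.nonempty_iInter_of_sequence_nonempty_isCompact_isClosed
          (fun m => H m ω ∩ C) (fun m => inter_subset_inter_left C (hHmono m ω)) h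
          (((hH 0).1 ω).inter_right hC) fun m => ?_
        exact aux_compact_isClosed hsep h𝒰o (((hH m).1 ω).inter_right hC)
      obtain ⟨x, hx⟩ := hne
      simp only [Set.mem_iInter, Set.mem_inter_iff] at hx
      refine ⟨x, ?_, (hx 0).2⟩
      rw [← hHiInter ω]
      exact Set.mem_iInter.mpr fun m => (hx m).1
  rw [key]
  exact MeasurableSet.iInter fun m => (hH m).2 C hC
end

section
/- A topological space X is T1 and C-separated (i.e., its family of all open sets is C-separating) if and only if every compact subset of X is closed. -/
/-- A topological space is T1 and C-separated (the family of all open sets is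
C-separating) if and only if every compact set is closed. -/
theorem stmt_8 {X : Type*} [TopologicalSpace X] :
    (T1Space X ∧ ∀ K C : Set X, IsCompact K → IsClosed C → Disjoint K C →
        ∃ U : Set X, IsOpen U ∧ C ⊆ U ∧ U ∩ K = ∅) ↔
      ∀ K : Set X, IsCompact K → IsClosed K := by
  constructor
  · rintro ⟨h1, hsep⟩ K hK
    rw [← isOpen_compl_iff]
    rw [isOpen_iff_forall_mem_open]
    intro x hx
    obtain ⟨U, hU, hCU, hUK⟩ := hsep K {x} hK isClosed_singleton
      (Set.disjoint_singleton_right.mpr hx)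
    exact ⟨U, fun y hy hyK => Set.eq_empty_iff_forall_notMem.mp hUK y ⟨hy, hyK⟩,
      hU, hCU rfl⟩
  · intro h
    refine ⟨⟨fun x => h {x} isCompact_singleton⟩, fun K C hK _ hdis => ?_⟩
    refine ⟨Kᶜ, (h K hK).isOpen_compl, fun c hc => hdis.subset_compl_left hc, ?_⟩
    simp
end

section
/- Let Ω be a measurable space and X a separable metric space. If F : Ω → X is a closed-valued open-measurable multifunction, then its graph Gr F := {(ω, x) | x ∈ F(ω)} is measurable with respect to the product σ-algebra of the σ-algebra of Ω and the Borel σ-algebra of X. -/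
open TopologicalSpace

/-- A closed-valued open-measurable multifunction into a separable metric space has a
graph which is measurable for the product sigma-algebra. -/
theorem stmt_11 {Ω X : Type*} [MeasurableSpace Ω] [MetricSpace X] [SeparableSpace X]
    [MeasurableSpace X] [BorelSpace X]
    (F : Ω → Set X)
    (hFcl : ∀ ω, IsClosed (F ω))
    (hF : ∀ U : Set X, IsOpen U → MeasurableSet {ω | (F ω ∩ U).Nonempty}) :
    MeasurableSet {p : Ω × X | p.2 ∈ F p.1} := by
  rcases isEmpty_or_nonempty X with hX | hX
  · have : {p : Ω × X | p.2 ∈ F p.1} = ∅ := by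
      ext ⟨ω, x⟩; exact iff_of_false (fun _ => hX.elim x) (fun h => h)
    rw [this]; exact MeasurableSet.empty
  obtain ⟨u, hu⟩ := TopologicalSpace.exists_dense_seq X
  have key : {p : Ω × X | p.2 ∈ F p.1} =
      ⋂ n : ℕ, ⋃ i : ℕ,
        ({ω | (F ω ∩ Metric.ball (u i) (1 / (n + 1))).Nonempty} ×ˢ
          Metric.ball (u i) (1 / (n + 1))) := by
    ext ⟨ω, x⟩
    simp only [Set.mem_setOf_eq, Set.mem_iInter, Set.mem_iUnion, Set.mem_prod,
      Metric.mem_ball]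
    constructor
    · intro hx n
      have hpos : (0 : ℝ) < 1 / (n + 1) := by positivity
      obtain ⟨i, hi⟩ := hu.exists_dist_lt x hpos
      exact ⟨i, ⟨x, hx, by simpa [Metric.mem_ball, dist_comm] using hi⟩, by simpa [dist_comm] using hi⟩
    · intro h
      rw [← (hFcl ω).closure_eq]
      rw [Metric.mem_closure_iff]
      intro ε hε
      obtain ⟨n, hn⟩ := exists_nat_one_div_lt (half_pos hε)
      obtain ⟨i, ⟨y, hyF, hy⟩, hxball⟩ := h n
      rw [Metric.mem_ball] at hy
      refine ⟨y, hyF, ?_⟩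
      calc dist x y ≤ dist x (u i) + dist y (u i) := dist_triangle_right _ _ _
        _ < 1 / (n + 1) + 1 / (n + 1) := add_lt_add hxball hy
        _ < ε / 2 + ε / 2 := add_lt_add hn hn
        _ = ε := add_halves ε
  rw [key]
  refine MeasurableSet.iInter fun n => MeasurableSet.iUnion fun i => ?_
  exact (hF _ Metric.isOpen_ball).prod Metric.isOpen_ball.measurableSet
end

section
/- Let Ω be a measurable space and X a Polish space. If F : Ω → X is a multifunction whose graph Gr F := {(ω, x) | x ∈ F(ω)} is measurable with respect to the product σ-algebra of the σ-algebra of Ω and the Borel σ-algebra of X, then F is universally Borel-measurable: for every Borel set A ⊆ X and every finite measure μ on Ω, the set F⁻¹(A) := {ω | F(ω) ∩ A ≠ ∅} lies in the μ-completion of the σ-algebra of Ω. -/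
open MeasureTheory Set Filter Topology
open scoped ENNReal

/-! The set `F⁻¹(A)` is the projection to `Ω` of the measurable set `Gr F ∩ (Ω × A)`, so it
suffices to show that projections of product-measurable sets are universally measurable. Such a
set involves only countably many measurable rectangles, hence it is the preimage under `g × id`,
for a measurable `g` into a standard Borel space `Z`, of a Borel subset of `Z × X`; its projection
is then the `g`-preimage of an analytic subset of `Z`.

Analytic sets are universally measurable by the capacity argument: for a continuous
`f : ℕ^ℕ → X`, choose bounds `n₀, n₁, …` one at a time so that imposing `x k ≤ n k` loses at most
`δ k` of the outer measure of the image. The closed sets `closure (f {x | ∀ i < k, x i ≤ n i})`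
then decrease to a subset of the range of `f` (by compactness of `∏ i, [0, n i]`) whose measure
is within `∑ δ k` of that of the range. -/

namespace MeasureTheory

section InnerApproximation

variable {α : Type*} [MeasurableSpace α] {ν : Measure α}

theorem nullMeasurableSet_of_forall_exists_measurableSet_subset {S : Set α} (hS : ν S ≠ ∞)
    (h : ∀ ε ≠ 0, ∃ C ⊆ S, MeasurableSet C ∧ ν S ≤ ν C + ε) : NullMeasurableSet S ν := by
  choose C hCS hCm hSC using fun n : ℕ => h (n : ℝ≥0∞)⁻¹ (by simp)
  have hDm : MeasurableSet (⋃ n, C n) := .iUnion hCm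
  have hSD : ν S ≤ ν (⋃ n, C n) := by
    refine ENNReal.le_of_forall_pos_le_add fun ε hε _ => ?_
    obtain ⟨n, hn⟩ := ENNReal.exists_inv_nat_lt (a := ε) (by exact_mod_cast hε.ne')
    calc ν S ≤ ν (C n) + (n : ℝ≥0∞)⁻¹ := hSC n
      _ ≤ ν (⋃ n, C n) + ε := add_le_add (measure_mono (subset_iUnion C n)) hn.le
  exact hDm.nullMeasurableSet.congr
    (ae_eq_of_subset_of_measure_ge (iUnion_subset hCS) hSD hDm.nullMeasurableSet hS)

theorem exists_measure_iUnion_le_measure_add {t : ℕ → Set α} (ht : Monotone t)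
    (hfin : ν (⋃ j, t j) ≠ ∞) {δ : ℝ≥0∞} (hδ : δ ≠ 0) : ∃ j, ν (⋃ j, t j) ≤ ν (t j) + δ :=
  (((tendsto_measure_iUnion_atTop ht).add tendsto_const_nhds).eventually_const_lt
    (ENNReal.lt_add_right hfin hδ)).exists.imp fun _ h => h.le

theorem exists_measure_range_le_measure_image_add [IsFiniteMeasure ν] (f : (ℕ → ℕ) → α)
    {δ : ℕ → ℝ≥0∞} (hδ : ∀ k, δ k ≠ 0) : ∃ n : ℕ → ℕ, ∀ k,
      ν (range f) ≤ ν (f '' {x | ∀ i < k, x i ≤ n i}) + ∑ i ∈ Finset.range k, δ i := by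
  have step (s : Set (ℕ → ℕ)) (k : ℕ) :
      ∃ j, ν (f '' s) ≤ ν (f '' (s ∩ {x | x k ≤ j})) + δ k := by
    have hcover : f '' s = ⋃ j, f '' (s ∩ {x | x k ≤ j}) := by
      rw [← image_iUnion, ← inter_iUnion,
        iUnion_eq_univ_iff.2 fun x => ⟨x k, show x k ≤ x k from le_rfl⟩, inter_univ]
    rw [hcover]
    exact exists_measure_iUnion_le_measure_add (t := fun j => f '' (s ∩ {x | x k ≤ j}))
      (fun a b hab => image_mono (inter_subset_inter_right _ fun x hx => le_trans hx hab))
      (measure_ne_top _ _) (hδ k)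
  choose pick hpick using step
  let S : ℕ → Set (ℕ → ℕ) := fun k => Nat.rec univ (fun k s => s ∩ {x | x k ≤ pick s k}) k
  have hS (k : ℕ) : S k = {x | ∀ i < k, x i ≤ pick (S i) i} := by
    induction k with
    | zero => simp [S]
    | succ k ih =>
      ext x
      change x ∈ S k ∧ x k ≤ pick (S k) k ↔ ∀ i < k + 1, x i ≤ pick (S i) i
      rw [Set.ext_iff.1 ih x, Nat.forall_lt_succ_right]
      rfl
  refine ⟨fun i => pick (S i) i, fun k => ?_⟩
  rw [← hS]
  induction k with
  | zero => simp [S]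
  | succ k ih =>
    calc ν (range f) ≤ ν (f '' S k) + ∑ i ∈ Finset.range k, δ i := ih
      _ ≤ ν (f '' S (k + 1)) + δ k + ∑ i ∈ Finset.range k, δ i := by gcongr; exact hpick _ _
      _ = ν (f '' S (k + 1)) + ∑ i ∈ Finset.range (k + 1), δ i := by
        rw [Finset.sum_range_succ, add_assoc, add_comm (δ k)]

end InnerApproximation

theorem exists_tendsto_subseq_of_forall_lt_le {x : ℕ → ℕ → ℕ} {n : ℕ → ℕ}
    (hx : ∀ k, ∀ i < k, x k i ≤ n i) :
    ∃ (a : ℕ → ℕ) (φ : ℕ → ℕ), StrictMono φ ∧ Tendsto (x ∘ φ) atTop (𝓝 a) := by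
  set m : ℕ → ℕ := fun i => max (n i) ((Finset.range (i + 1)).sup fun k => x k i)
  have hxm (k : ℕ) : x k ∈ univ.pi fun i : ℕ => Iic (m i) := by
    intro i _
    rcases lt_or_ge i k with hik | hki
    · exact (hx k i hik).trans (le_max_left _ _)
    · exact (Finset.le_sup (f := fun k => x k i) (Finset.mem_range.2 (Nat.lt_succ_of_le hki))).trans
        (le_max_right _ _)
  obtain ⟨a, -, φ, hφ, hlim⟩ :=
    (isCompact_univ_pi fun i => (finite_Iic (m i)).isCompact).tendsto_subseq hxm
  exact ⟨a, φ, hφ, hlim⟩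

theorem iInter_closure_image_subset_range {β : Type*} [MetricSpace β] {f : (ℕ → ℕ) → β}
    (hf : Continuous f) (n : ℕ → ℕ) :
    ⋂ k, closure (f '' {x | ∀ i < k, x i ≤ n i}) ⊆ range f := by
  intro y hy
  have hclose (k : ℕ) : ∃ x, (∀ i < k, x i ≤ n i) ∧ dist (f x) y < 1 / (k + 1) := by
    obtain ⟨_, ⟨x, hx, rfl⟩, hxy⟩ :=
      Metric.mem_closure_iff.1 (mem_iInter.1 hy k) (1 / (k + 1)) (by positivity)
    exact ⟨x, hx, dist_comm y (f x) ▸ hxy⟩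
  choose x hxn hxy using hclose
  obtain ⟨a, φ, hφ, ha⟩ := exists_tendsto_subseq_of_forall_lt_le hxn
  have hfx : Tendsto (f ∘ x) atTop (𝓝 y) :=
    tendsto_iff_dist_tendsto_zero.2 <| squeeze_zero (fun _ => dist_nonneg) (fun k => (hxy k).le)
      tendsto_one_div_add_atTop_nhds_zero_nat
  exact ⟨a, tendsto_nhds_unique ((hf.tendsto a).comp ha) (hfx.comp hφ.tendsto_atTop)⟩

section Polish

variable {α : Type*} [TopologicalSpace α] [PolishSpace α] [MeasurableSpace α] [BorelSpace α]
  {ν : Measure α} [IsFiniteMeasure ν]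

theorem nullMeasurableSet_range_of_continuous {f : (ℕ → ℕ) → α} (hf : Continuous f) :
    NullMeasurableSet (range f) ν := by
  let := TopologicalSpace.upgradeIsCompletelyMetrizable α
  refine nullMeasurableSet_of_forall_exists_measurableSet_subset (measure_ne_top _ _)
    fun ε hε => ?_
  obtain ⟨δ, hδpos, hδε⟩ := ENNReal.exists_pos_sum_of_countable' hε ℕ
  obtain ⟨n, hn⟩ := exists_measure_range_le_measure_image_add (ν := ν) f fun k => (hδpos k).ne'
  set B : ℕ → Set α := fun k => closure (f '' {x | ∀ i < k, x i ≤ n i})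
  have hB : Antitone B := fun a b hab =>
    closure_mono (image_mono fun x hx i hi => hx i (hi.trans_le hab))
  refine ⟨⋂ k, B k, iInter_closure_image_subset_range hf n,
    .iInter fun k => isClosed_closure.measurableSet, ?_⟩
  rw [hB.measure_iInter (fun k => isClosed_closure.nullMeasurableSet) ⟨0, measure_ne_top _ _⟩,
    ENNReal.iInf_add]
  refine le_iInf fun k => (hn k).trans (add_le_add (measure_mono subset_closure) ?_)
  exact (ENNReal.sum_le_tsum _).trans hδε.le

theorem AnalyticSet.nullMeasurableSet_s12 {s : Set α} (hs : AnalyticSet s) :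
    NullMeasurableSet s ν := by
  rw [AnalyticSet] at hs
  rcases hs with rfl | ⟨f, hf, rfl⟩
  exacts [.empty, nullMeasurableSet_range_of_continuous hf]

end Polish

section Projection

variable {Ω X : Type*} [MeasurableSpace Ω] [MeasurableSpace X]

/-- Every product-measurable set has this form, which reduces the projection theorem to the case
of a standard Borel first factor. -/
def IsStandardBorelPullback (M : Set (Ω × X)) : Prop :=
  ∃ (Z : Type) (_ : MeasurableSpace Z) (_ : StandardBorelSpace Z) (g : Ω → Z) (M' : Set (Z × X)),
    Measurable g ∧ MeasurableSet M' ∧ M = Prod.map g id ⁻¹' M'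

theorem MeasurableSet.isStandardBorelPullback {M : Set (Ω × X)} (hM : MeasurableSet M) :
    IsStandardBorelPullback M := by
  rw [← generateFrom_prod] at hM
  induction M, hM using MeasurableSpace.generateFrom_induction with
  | hC _ hM =>
    classical
    obtain ⟨A, hA : MeasurableSet A, B, hB : MeasurableSet B, rfl⟩ := hM
    refine ⟨Bool, _, inferInstance, fun ω => decide (ω ∈ A), {true} ×ˢ B,
      measurable_to_countable' fun b => ?_, (measurableSet_singleton _).prod hB, ?_⟩
    · cases b
      · convert hA.compl using 1; ext; simp
      · convert hA using 1; ext; simp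
    · ext; simp
  | empty =>
    exact ⟨Unit, _, inferInstance, fun _ => (), ∅, measurable_const, .empty, rfl⟩
  | compl _ _ ih =>
    obtain ⟨Z, _, _, g, M', hg, hM', rfl⟩ := ih
    exact ⟨Z, _, inferInstance, g, M'ᶜ, hg, hM'.compl, rfl⟩
  | iUnion s _ ih =>
    choose Z _ _ g M' hg hM' hs using ih
    refine ⟨∀ n, Z n, inferInstance, inferInstance, fun ω n => g n ω,
      ⋃ n, Prod.map (fun z => z n) id ⁻¹' M' n, measurable_pi_lambda _ hg,
      .iUnion fun n => ((measurable_pi_apply n).prodMap measurable_id) (hM' n), ?_⟩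
    simp_rw [preimage_iUnion, hs]
    rfl

variable [TopologicalSpace X] [PolishSpace X] [BorelSpace X]

theorem MeasurableSet.nullMeasurableSet_image_fst {M : Set (Ω × X)} (hM : MeasurableSet M)
    (μ : Measure Ω) [IsFiniteMeasure μ] : NullMeasurableSet (Prod.fst '' M) μ := by
  obtain ⟨Z, _, _, g, M', hg, hM', rfl⟩ := hM.isStandardBorelPullback
  let := upgradeStandardBorel Z
  have hproj : Prod.fst '' (Prod.map g id ⁻¹' M') = g ⁻¹' (Prod.fst '' M') := by
    ext ω; simp
  rw [hproj]
  exact (hM'.analyticSet_image measurable_fst).nullMeasurableSet_s12.preimage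
    (hg.quasiMeasurePreserving μ)

end Projection

end MeasureTheory

/-- A multifunction into a Polish space with measurable graph is universally
Borel-measurable. -/
theorem stmt_12 {Ω X : Type*} [MeasurableSpace Ω] [TopologicalSpace X] [PolishSpace X]
    [MeasurableSpace X] [BorelSpace X]
    (F : Ω → Set X)
    (hGr : MeasurableSet {p : Ω × X | p.2 ∈ F p.1}) :
    ∀ A : Set X, MeasurableSet A → ∀ (μ : Measure Ω), IsFiniteMeasure μ →
      NullMeasurableSet {ω | (F ω ∩ A).Nonempty} μ := by
  intro A hA μ _
  have hproj : {ω | (F ω ∩ A).Nonempty} =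
      Prod.fst '' ({p : Ω × X | p.2 ∈ F p.1} ∩ Prod.snd ⁻¹' A) := by
    ext ω; simp [Set.Nonempty]
  rw [hproj]
  exact (hGr.inter (measurable_snd hA)).nullMeasurableSet_image_fst μ
end

section
/- Equip E := ℂ^ℕ with the product σ-algebra of countably many copies of the Borel σ-algebra of ℂ. The essential spectrum multifunction Sp_ess : E → ℂ defined by Sp_ess(x) := ⋂_{n≥1} closure({xₙ, xₙ₊₁, …}) is open-measurable: for every open U ⊆ ℂ, the set {x ∈ E | Sp_ess(x) ∩ U ≠ ∅} is measurable. -/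
/-!
`⋂ n, closure (x '' Ici n)` is the set of cluster points of the sequence `x`. In a locally
compact second countable space, a cluster point in the open set `U` exists iff `x` visits
infinitely often some basic open set `V` whose closure is compact and contained in `U`: one
direction because `V` is a neighbourhood of the cluster point, the other by compactness of
`closure V`. This writes the set in question as a countable union of sets
`{x | ∃ᶠ n, x n ∈ V} = limsup_n {x | x n ∈ V}`, which are measurable.
-/

open Set Filter TopologicalSpace

theorem measurableSet_setOf_frequently_mem {X : Type*} [MeasurableSpace X] {V : Set X}
    (hV : MeasurableSet V) : MeasurableSet {x : ℕ → X | ∃ᶠ n in atTop, x n ∈ V} := by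
  have : {x : ℕ → X | ∃ᶠ n in atTop, x n ∈ V} = limsup (fun n ↦ (fun x ↦ x n) ⁻¹' V) atTop := by
    ext x
    simp [mem_limsup_iff_frequently_mem]
  rw [this]
  exact MeasurableSet.measurableSet_limsup fun n ↦ measurable_pi_apply n hV

section ClusterPoints

variable {X : Type*} [TopologicalSpace X] [R1Space X] [WeaklyLocallyCompactSpace X]
  [SecondCountableTopology X]

theorem exists_mem_countableBasis_isCompact_closure_subset {U : Set X} (hU : IsOpen U)
    {z : X} (hz : z ∈ U) :
    ∃ V ∈ countableBasis X, z ∈ V ∧ IsCompact (closure V) ∧ closure V ⊆ U := by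
  obtain ⟨K, ⟨hKz, hKc, hKcl⟩, hKU⟩ :=
    (isCompact_isClosed_basis_nhds z).mem_iff.1 (hU.mem_nhds hz)
  obtain ⟨V, hV, hzV, hVK⟩ := (isBasis_countableBasis X).mem_nhds_iff.1 hKz
  have hVK' : closure V ⊆ K := closure_minimal hVK hKcl
  exact ⟨V, hV, hzV, hKc.of_isClosed_subset isClosed_closure hVK', hVK'.trans hKU⟩

theorem exists_mapClusterPt_mem_iff {ι : Type*} {l : Filter ι} {x : ι → X} {U : Set X}
    (hU : IsOpen U) :
    (∃ z ∈ U, MapClusterPt z l x) ↔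
      ∃ V ∈ countableBasis X, IsCompact (closure V) ∧ closure V ⊆ U ∧ ∃ᶠ i in l, x i ∈ V := by
  constructor
  · rintro ⟨z, hzU, hz⟩
    obtain ⟨V, hV, hzV, hVc, hVU⟩ := exists_mem_countableBasis_isCompact_closure_subset hU hzU
    exact ⟨V, hV, hVc, hVU, hz.frequently ((isBasis_countableBasis X).mem_nhds hV hzV)⟩
  · rintro ⟨V, -, hVc, hVU, hxV⟩
    obtain ⟨z, hzV, hz⟩ :=
      hVc.exists_mapClusterPt_of_frequently (hxV.mono fun _ ↦ (subset_closure ·))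
    exact ⟨z, hVU hzV, hz⟩

theorem measurableSet_setOf_exists_mapClusterPt_mem [MeasurableSpace X] [OpensMeasurableSpace X]
    {U : Set X} (hU : IsOpen U) :
    MeasurableSet {x : ℕ → X | ∃ z ∈ U, MapClusterPt z atTop x} := by
  have : {x : ℕ → X | ∃ z ∈ U, MapClusterPt z atTop x} =
      ⋃ V ∈ {V ∈ countableBasis X | IsCompact (closure V) ∧ closure V ⊆ U},
        {x : ℕ → X | ∃ᶠ n in atTop, x n ∈ V} := by
    ext x
    simp only [mem_ofPred_eq, mem_iUnion, exists_prop, and_assoc,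
      exists_mapClusterPt_mem_iff hU]
  rw [this]
  exact .biUnion ((countable_countableBasis X).mono (sep_subset _ _)) fun V hV ↦
    measurableSet_setOf_frequently_mem (isOpen_of_mem_countableBasis hV.1).measurableSet

end ClusterPoints

/-- The essential spectrum multifunction `Sp_ess x = ⋂ n, closure {xₙ, xₙ₊₁, …}` on
`ℂ^ℕ` with the product sigma-algebra is open-measurable. -/
theorem stmt_15 :
    ∀ U : Set ℂ, IsOpen U →
      MeasurableSet
        {x : ℕ → ℂ | ((⋂ n : ℕ, closure (x '' Set.Ici n)) ∩ U).Nonempty} := by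
  intro U hU
  simpa only [inter_nonempty, mem_iInter, ← mapClusterPt_atTop_iff_forall_mem_closure, and_comm]
    using measurableSet_setOf_exists_mapClusterPt_mem hU
end
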